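/- Let σ_s, σ_a : (0,1) → ℝ with σ_s(x) ≥ s₀ > 0 and 0 < σ_a(x) ≤ a₁ for all x. For each Kn ∈ (0,1], let f_Kn, g_Kn : (0,1) × [-1,1] → ℝ be continuous, continuously differentiable in x with jointly continuous x-derivatives, satisfying v·∂ₓf_Kn = (σ_s/Kn)·(⟨f_Kn⟩ − f_Kn) − Kn·σ_a·f_Kn and −v·∂ₓg_Kn = (σ_s/Kn)·(⟨g_Kn⟩ − g_Kn) − Kn·σ_a·g_Kn pointwise, and assume the uniform bound sup_{Kn∈(0,1]} sup_{x∈(0,1)} |(d/dx)(⟨f_Kn⟩·⟨g_Kn⟩)(x)| ≤ M < ∞. Then for γ_Kn(x) := (1/Kn)·(⟨f_Kn⟩(x)·⟨g_Kn⟩(x) − ⟨f_Kn g_Kn⟩(x)) one has sup_{x∈(0,1)} |(d/dx)γ_Kn(x)| ≤ (a₁·M/s₀)·Kn for every Kn ∈ (0,1]; in particular (d/dx)γ_Kn → 0 uniformly as Kn → 0. -/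

import Mathlib

open MeasureTheory Set

/-- Velocity average `⟨h⟩(x) = (1/2)∫_{-1}^{1} h(x,v) dv`. -/
noncomputable def vavg (h : ℝ → ℝ → ℝ) (x : ℝ) : ℝ := (1 / 2) * ∫ v in (-1 : ℝ)..1, h x v

/-!
Multiplying the forward equation for `f` by `∂ₓg`, the backward one for `g` by `∂ₓf` and adding,
the transport terms `v ∂ₓf ∂ₓg` cancel and leave
`(σ_s + Kn² σ_a) ∂ₓ(f g) = σ_s (⟨f⟩ ∂ₓg + ⟨g⟩ ∂ₓf)`. Averaging in `v` gives
`∂ₓ⟨f g⟩ = σ_s / (σ_s + Kn² σ_a) · ∂ₓ(⟨f⟩⟨g⟩)`, hence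
`∂ₓγ_Kn = Kn σ_a / (σ_s + Kn² σ_a) · ∂ₓ(⟨f⟩⟨g⟩)`, whose absolute value is at most `(a₁ / s₀) Kn M`.
-/

theorem hasDerivAt_intervalIntegral_of_continuousOn {E : Type*} [NormedAddCommGroup E]
    [NormedSpace ℝ E] {F F' : ℝ → ℝ → E} {U : Set ℝ} {a b x : ℝ} (hU : IsOpen U) (hab : a ≤ b)
    (hF : ContinuousOn (Function.uncurry F) (U ×ˢ Icc a b))
    (hF' : ContinuousOn (Function.uncurry F') (U ×ˢ Icc a b))
    (hderiv : ∀ y ∈ U, ∀ t ∈ Icc a b, HasDerivAt (F · t) (F' y t) y) (hx : x ∈ U) :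
    HasDerivAt (fun y => ∫ t in a..b, F y t) (∫ t in a..b, F' x t) x := by
  obtain ⟨ε, hε, hball⟩ := Metric.nhds_basis_closedBall.mem_iff.1 (hU.mem_nhds hx)
  obtain ⟨C, hC⟩ := (isCompact_closedBall x ε |>.prod isCompact_Icc).exists_bound_of_continuousOn
    (hF'.mono (prod_mono hball subset_rfl))
  have hIoc : uIoc a b ⊆ Icc a b := uIoc_of_le hab ▸ Ioc_subset_Icc_self
  have hslice : ∀ y ∈ U, IntervalIntegrable (F y) volume a b := fun y hy =>
    (hF.uncurry_left y hy).intervalIntegrable_of_Icc hab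
  have hslice' : IntervalIntegrable (F' x) volume a b :=
    (hF'.uncurry_left x hx).intervalIntegrable_of_Icc hab
  refine (intervalIntegral.hasDerivAt_integral_of_dominated_loc_of_deriv_le (bound := fun _ => C)
    (Metric.closedBall_mem_nhds x hε)
    (Filter.eventually_of_mem (Metric.closedBall_mem_nhds x hε)
      fun y hy => (hslice y (hball hy)).def'.aestronglyMeasurable)
    (hslice x hx) hslice'.def'.aestronglyMeasurable
    (Filter.Eventually.of_forall fun t ht y hy => hC (y, t) ⟨hy, hIoc ht⟩)
    intervalIntegrable_const
    (Filter.Eventually.of_forall fun t ht y hy => hderiv y (hball hy) t (hIoc ht))).2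

theorem hasDerivAt_vavg {h h' : ℝ → ℝ → ℝ} {U : Set ℝ} {x : ℝ} (hU : IsOpen U)
    (hc : ContinuousOn (Function.uncurry h) (U ×ˢ Icc (-1) 1))
    (hc' : ContinuousOn (Function.uncurry h') (U ×ˢ Icc (-1) 1))
    (hderiv : ∀ y ∈ U, ∀ v ∈ Icc (-1 : ℝ) 1, HasDerivAt (h · v) (h' y v) y) (hx : x ∈ U) :
    HasDerivAt (vavg h) (vavg h' x) x :=
  (hasDerivAt_intervalIntegral_of_continuousOn hU (by norm_num) hc hc' hderiv hx).const_mul _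

theorem transport_mul_deriv_eq {κ v S A P Q f g f' g' : ℝ} (hκ : κ ≠ 0)
    (hf : v * f' = S / κ * (P - f) - κ * A * f)
    (hg : -(v * g') = S / κ * (Q - g) - κ * A * g) :
    (S + κ ^ 2 * A) * (f' * g + f * g') = S * (P * g' + Q * f') := by
  field_simp at hf hg
  linear_combination g' * hf + f' * hg

theorem vavg_transport_mul_deriv_eq {f g fx gx : ℝ → ℝ → ℝ} {x κ S A : ℝ} (hκ : κ ≠ 0)
    (hSA : S + κ ^ 2 * A ≠ 0)
    (hfx : IntervalIntegrable (fx x) volume (-1) 1)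
    (hgx : IntervalIntegrable (gx x) volume (-1) 1)
    (hf : ∀ v ∈ Icc (-1 : ℝ) 1, v * fx x v = S / κ * (vavg f x - f x v) - κ * A * f x v)
    (hg : ∀ v ∈ Icc (-1 : ℝ) 1, -(v * gx x v) = S / κ * (vavg g x - g x v) - κ * A * g x v) :
    vavg (fun y v => fx y v * g y v + f y v * gx y v) x
      = S / (S + κ ^ 2 * A) * (vavg fx x * vavg g x + vavg f x * vavg gx x) := by
  have hpointwise : ∀ v ∈ uIcc (-1 : ℝ) 1, fx x v * g x v + f x v * gx x v
      = S / (S + κ ^ 2 * A) * (vavg f x * gx x v + vavg g x * fx x v) := by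
    intro v hv
    rw [uIcc_of_le (by norm_num)] at hv
    rw [div_mul_eq_mul_div, eq_div_iff hSA, mul_comm]
    exact transport_mul_deriv_eq hκ (hf v hv) (hg v hv)
  rw [vavg, intervalIntegral.integral_congr hpointwise, intervalIntegral.integral_const_mul,
    intervalIntegral.integral_add (hgx.const_mul _) (hfx.const_mul _),
    intervalIntegral.integral_const_mul, intervalIntegral.integral_const_mul]
  simp only [vavg]
  ring

theorem abs_one_div_mul_sub_div_mul_le {κ S A D M s₀ a₁ : ℝ} (hκ : 0 < κ) (hs₀ : 0 < s₀)
    (hS : s₀ ≤ S) (hA : 0 ≤ A) (hAa₁ : A ≤ a₁) (hD : |D| ≤ M) :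
    |1 / κ * (D - S / (S + κ ^ 2 * A) * D)| ≤ a₁ * M / s₀ * κ := by
  have hden : s₀ ≤ S + κ ^ 2 * A := le_add_of_le_of_nonneg hS (by positivity)
  have hden_pos : 0 < S + κ ^ 2 * A := hs₀.trans_le hden
  have ha₁ : 0 ≤ a₁ := hA.trans hAa₁
  have hrewrite : 1 / κ * (D - S / (S + κ ^ 2 * A) * D) = κ * A / (S + κ ^ 2 * A) * D := by
    field_simp
    ring
  have hratio : κ * A / (S + κ ^ 2 * A) ≤ a₁ / s₀ * κ := by
    rw [div_le_iff₀ hden_pos, div_mul_eq_mul_div, div_mul_eq_mul_div,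
      le_div_iff₀ hs₀]
    nlinarith [mul_le_mul hAa₁ hden hs₀.le ha₁]
  rw [hrewrite, abs_mul, abs_of_nonneg (div_nonneg (by positivity) hden_pos.le)]
  calc κ * A / (S + κ ^ 2 * A) * |D| ≤ a₁ / s₀ * κ * M :=
        mul_le_mul hratio hD (abs_nonneg D) (by positivity)
    _ = a₁ * M / s₀ * κ := by ring

theorem gamma_deriv_uniform_bound_subcritical_1D_general
    (σs σa : ℝ → ℝ) (s₀ a₁ M : ℝ) (hs₀ : 0 < s₀)
    (hσs : ∀ x ∈ Ioo (0 : ℝ) 1, s₀ ≤ σs x)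
    (hσa : ∀ x ∈ Ioo (0 : ℝ) 1, 0 < σa x ∧ σa x ≤ a₁)
    (f g fx gx : ℝ → ℝ → ℝ → ℝ)
    (hf_cont : ∀ Kn ∈ Ioc (0 : ℝ) 1,
      ContinuousOn (fun p : ℝ × ℝ => f Kn p.1 p.2) (Ioo 0 1 ×ˢ Icc (-1) 1))
    (hg_cont : ∀ Kn ∈ Ioc (0 : ℝ) 1,
      ContinuousOn (fun p : ℝ × ℝ => g Kn p.1 p.2) (Ioo 0 1 ×ˢ Icc (-1) 1))
    (hfx_cont : ∀ Kn ∈ Ioc (0 : ℝ) 1,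
      ContinuousOn (fun p : ℝ × ℝ => fx Kn p.1 p.2) (Ioo 0 1 ×ˢ Icc (-1) 1))
    (hgx_cont : ∀ Kn ∈ Ioc (0 : ℝ) 1,
      ContinuousOn (fun p : ℝ × ℝ => gx Kn p.1 p.2) (Ioo 0 1 ×ˢ Icc (-1) 1))
    (hf_deriv : ∀ Kn ∈ Ioc (0 : ℝ) 1, ∀ x ∈ Ioo (0 : ℝ) 1, ∀ v ∈ Icc (-1 : ℝ) 1,
      HasDerivAt (fun y => f Kn y v) (fx Kn x v) x)
    (hg_deriv : ∀ Kn ∈ Ioc (0 : ℝ) 1, ∀ x ∈ Ioo (0 : ℝ) 1, ∀ v ∈ Icc (-1 : ℝ) 1,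
      HasDerivAt (fun y => g Kn y v) (gx Kn x v) x)
    (hfeq : ∀ Kn ∈ Ioc (0 : ℝ) 1, ∀ x ∈ Ioo (0 : ℝ) 1, ∀ v ∈ Icc (-1 : ℝ) 1,
      v * fx Kn x v = (σs x / Kn) * (vavg (f Kn) x - f Kn x v) - Kn * σa x * f Kn x v)
    (hgeq : ∀ Kn ∈ Ioc (0 : ℝ) 1, ∀ x ∈ Ioo (0 : ℝ) 1, ∀ v ∈ Icc (-1 : ℝ) 1,
      -(v * gx Kn x v) = (σs x / Kn) * (vavg (g Kn) x - g Kn x v) - Kn * σa x * g Kn x v)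
    (D : ℝ → ℝ → ℝ)
    (hD : ∀ Kn ∈ Ioc (0 : ℝ) 1, ∀ x ∈ Ioo (0 : ℝ) 1,
      HasDerivAt (fun y => vavg (f Kn) y * vavg (g Kn) y) (D Kn x) x)
    (hM : ∀ Kn ∈ Ioc (0 : ℝ) 1, ∀ x ∈ Ioo (0 : ℝ) 1, |D Kn x| ≤ M) :
    ∀ Kn ∈ Ioc (0 : ℝ) 1, ∀ x ∈ Ioo (0 : ℝ) 1, ∃ dγ : ℝ,
      HasDerivAt
        (fun y => (1 / Kn) *
          (vavg (f Kn) y * vavg (g Kn) y - vavg (fun y v => f Kn y v * g Kn y v) y))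
        dγ x ∧
      |dγ| ≤ a₁ * M / s₀ * Kn := by
  intro Kn hKn x hx
  obtain ⟨hσa_pos, hσa_le⟩ := hσa x hx
  have hden : σs x + Kn ^ 2 * σa x ≠ 0 := by
    have := hs₀.trans_le (hσs x hx)
    positivity
  have hf' := hasDerivAt_vavg isOpen_Ioo (hf_cont Kn hKn) (hfx_cont Kn hKn) (hf_deriv Kn hKn) hx
  have hg' := hasDerivAt_vavg isOpen_Ioo (hg_cont Kn hKn) (hgx_cont Kn hKn) (hg_deriv Kn hKn) hx
  have hfg' := hasDerivAt_vavg (h := fun y v => f Kn y v * g Kn y v)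
    (h' := fun y v => fx Kn y v * g Kn y v + f Kn y v * gx Kn y v) isOpen_Ioo ((hf_cont Kn hKn).mul (hg_cont Kn hKn))
    (((hfx_cont Kn hKn).mul (hg_cont Kn hKn)).add ((hf_cont Kn hKn).mul (hgx_cont Kn hKn)))
    (fun y hy v hv => (hf_deriv Kn hKn y hy v hv).mul (hg_deriv Kn hKn y hy v hv)) hx
  have hD_eq : D Kn x = vavg (fx Kn) x * vavg (g Kn) x + vavg (f Kn) x * vavg (gx Kn) x :=
    (hD Kn hKn x hx).unique (hf'.mul hg')
  rw [vavg_transport_mul_deriv_eq hKn.1.ne' hden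
    ((hfx_cont Kn hKn).uncurry_left x hx |>.intervalIntegrable_of_Icc (by norm_num))
    ((hgx_cont Kn hKn).uncurry_left x hx |>.intervalIntegrable_of_Icc (by norm_num))
    (hfeq Kn hKn x hx) (hgeq Kn hKn x hx), ← hD_eq] at hfg'
  exact ⟨_, ((hD Kn hKn x hx).sub hfg').const_mul (1 / Kn),
    abs_one_div_mul_sub_div_mul_le hKn.1 hs₀ (hσs x hx) hσa_pos.le hσa_le (hM Kn hKn x hx)⟩

/-- **Quantitative Proposition 4.3.**  With `σ_s ≥ s₀ > 0`, `0 < σ_a ≤ a₁`, and a uniform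
bound `M` on `|(d/dx)(⟨f_Kn⟩⟨g_Kn⟩)|`, the kernel
`γ_Kn = (1/Kn)(⟨f_Kn⟩⟨g_Kn⟩ − ⟨f_Kn g_Kn⟩)` satisfies
`|(d/dx)γ_Kn(x)| ≤ (a₁·M/s₀)·Kn` for all `x ∈ (0,1)` and all `Kn ∈ (0,1]`. -/
theorem gamma_deriv_uniform_bound_subcritical_1D
    (σs σa : ℝ → ℝ) (s₀ a₁ M : ℝ) (hs₀ : 0 < s₀) (ha₁ : 0 < a₁)
    (hσs : ∀ x ∈ Ioo (0 : ℝ) 1, s₀ ≤ σs x)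
    (hσa : ∀ x ∈ Ioo (0 : ℝ) 1, 0 < σa x ∧ σa x ≤ a₁)
    (f g fx gx : ℝ → ℝ → ℝ → ℝ)
    (hf_cont : ∀ Kn ∈ Ioc (0 : ℝ) 1,
      ContinuousOn (fun p : ℝ × ℝ => f Kn p.1 p.2) (Ioo 0 1 ×ˢ Icc (-1) 1))
    (hg_cont : ∀ Kn ∈ Ioc (0 : ℝ) 1,
      ContinuousOn (fun p : ℝ × ℝ => g Kn p.1 p.2) (Ioo 0 1 ×ˢ Icc (-1) 1))
    (hfx_cont : ∀ Kn ∈ Ioc (0 : ℝ) 1,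
      ContinuousOn (fun p : ℝ × ℝ => fx Kn p.1 p.2) (Ioo 0 1 ×ˢ Icc (-1) 1))
    (hgx_cont : ∀ Kn ∈ Ioc (0 : ℝ) 1,
      ContinuousOn (fun p : ℝ × ℝ => gx Kn p.1 p.2) (Ioo 0 1 ×ˢ Icc (-1) 1))
    (hf_deriv : ∀ Kn ∈ Ioc (0 : ℝ) 1, ∀ x ∈ Ioo (0 : ℝ) 1, ∀ v ∈ Icc (-1 : ℝ) 1,
      HasDerivAt (fun y => f Kn y v) (fx Kn x v) x)
    (hg_deriv : ∀ Kn ∈ Ioc (0 : ℝ) 1, ∀ x ∈ Ioo (0 : ℝ) 1, ∀ v ∈ Icc (-1 : ℝ) 1,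
      HasDerivAt (fun y => g Kn y v) (gx Kn x v) x)
    (hfeq : ∀ Kn ∈ Ioc (0 : ℝ) 1, ∀ x ∈ Ioo (0 : ℝ) 1, ∀ v ∈ Icc (-1 : ℝ) 1,
      v * fx Kn x v = (σs x / Kn) * (vavg (f Kn) x - f Kn x v) - Kn * σa x * f Kn x v)
    (hgeq : ∀ Kn ∈ Ioc (0 : ℝ) 1, ∀ x ∈ Ioo (0 : ℝ) 1, ∀ v ∈ Icc (-1 : ℝ) 1,
      -(v * gx Kn x v) = (σs x / Kn) * (vavg (g Kn) x - g Kn x v) - Kn * σa x * g Kn x v)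
    (D : ℝ → ℝ → ℝ)
    (hD : ∀ Kn ∈ Ioc (0 : ℝ) 1, ∀ x ∈ Ioo (0 : ℝ) 1,
      HasDerivAt (fun y => vavg (f Kn) y * vavg (g Kn) y) (D Kn x) x)
    (hM : ∀ Kn ∈ Ioc (0 : ℝ) 1, ∀ x ∈ Ioo (0 : ℝ) 1, |D Kn x| ≤ M) :
    ∀ Kn ∈ Ioc (0 : ℝ) 1, ∀ x ∈ Ioo (0 : ℝ) 1, ∃ dγ : ℝ,
      HasDerivAt
        (fun y => (1 / Kn) *
          (vavg (f Kn) y * vavg (g Kn) y - vavg (fun y v => f Kn y v * g Kn y v) y))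
        dγ x ∧
      |dγ| ≤ a₁ * M / s₀ * Kn :=
  gamma_deriv_uniform_bound_subcritical_1D_general σs σa s₀ a₁ M hs₀ hσs hσa f g fx gx hf_cont
    hg_cont hfx_cont hgx_cont hf_deriv hg_deriv hfeq hgeq D hD hM
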